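/- Let μ be a probability measure on ℝ^n and k : ℝ^n → ℝ a bounded measurable function. Then −ln ∫ exp(−k(x)) dμ(x) = inf over probability measures m on ℝ^n with H(m|μ) < ∞ of ( H(m|μ) + ∫ k(x) dm(x) ), where H(m|μ) = ∫ ln(dm/dμ) dm if m ≪ μ and H(m|μ) = +∞ otherwise. Moreover the infimum is attained by the Gibbs measure dm⋆ = e^{−k} dμ / ∫ e^{−k} dμ. -/

import Mathlib

open MeasureTheory

/-- Nonnegativity of relative entropy (KL divergence). -/
lemma stmt17_llr_nonneg {α : Type*} [MeasurableSpace α] (m ν : Measure α)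
    [IsProbabilityMeasure m] [IsProbabilityMeasure ν] (hmν : m ≪ ν)
    (h_int : Integrable (llr m ν) m) : 0 ≤ ∫ x, llr m ν x ∂m := by
  have h1 : (fun x ↦ Real.exp (-llr m ν x)) =ᵐ[m] fun x ↦ (ν.rnDeriv m x).toReal :=
    exp_neg_llr hmν
  have hint2 : Integrable (fun x ↦ Real.exp (-llr m ν x)) m :=
    Measure.integrable_toReal_rnDeriv.congr h1.symm
  have hjensen : Real.exp (∫ x, -llr m ν x ∂m) ≤ ∫ x, Real.exp (-llr m ν x) ∂m := by
    refine convexOn_exp.map_integral_le Real.continuous_exp.continuousOn isClosed_univ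
      (Filter.Eventually.of_forall fun x ↦ trivial) h_int.neg ?_
    exact hint2
  have hle : ∫ x, Real.exp (-llr m ν x) ∂m ≤ 1 := by
    rw [integral_congr_ae h1]
    calc ∫ x, (ν.rnDeriv m x).toReal ∂m
        ≤ (ν Set.univ).toReal := by
          rw [← setIntegral_univ]
          exact Measure.setIntegral_toReal_rnDeriv_le (measure_ne_top ν _)
      _ = 1 := by simp
  have h2 : Real.exp (-∫ x, llr m ν x ∂m) ≤ 1 := by
    rw [integral_neg] at hjensen
    exact hjensen.trans hle
  have := Real.exp_le_one_iff.mp h2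
  linarith

/-- Donsker–Varadhan / Gibbs variational formula for a bounded measurable potential `k`:
`−ln ∫ e^{−k} dμ` is the least value of `H(m|μ) + ∫ k dm` over probability measures
`m ≪ μ` with finite relative entropy, and the minimum is attained at the Gibbs
measure `dm⋆ = e^{−k} dμ / ∫ e^{−k} dμ`. -/
theorem stmt17 (n : ℕ) (μ : Measure (EuclideanSpace ℝ (Fin n))) [IsProbabilityMeasure μ]
    (k : EuclideanSpace ℝ (Fin n) → ℝ) (hk : Measurable k)
    (Ck : ℝ) (hbd : ∀ x, |k x| ≤ Ck) :
    IsLeast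
      {r : ℝ | ∃ m : Measure (EuclideanSpace ℝ (Fin n)),
        IsProbabilityMeasure m ∧ m ≪ μ ∧
        Integrable (fun x => Real.log (m.rnDeriv μ x).toReal) m ∧
        r = (∫ x, Real.log (m.rnDeriv μ x).toReal ∂m) + ∫ x, k x ∂m}
      (-Real.log (∫ x, Real.exp (-k x) ∂μ)) ∧
    (IsProbabilityMeasure
        (μ.withDensity fun x =>
          ENNReal.ofReal (Real.exp (-k x) / ∫ y, Real.exp (-k y) ∂μ)) ∧
      (μ.withDensity fun x =>
          ENNReal.ofReal (Real.exp (-k x) / ∫ y, Real.exp (-k y) ∂μ)) ≪ μ ∧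
      Integrable
        (fun x =>
          Real.log
            (((μ.withDensity fun x =>
                ENNReal.ofReal (Real.exp (-k x) / ∫ y, Real.exp (-k y) ∂μ)).rnDeriv μ
              x).toReal))
        (μ.withDensity fun x =>
          ENNReal.ofReal (Real.exp (-k x) / ∫ y, Real.exp (-k y) ∂μ)) ∧
      (∫ x,
            Real.log
              (((μ.withDensity fun x =>
                  ENNReal.ofReal (Real.exp (-k x) / ∫ y, Real.exp (-k y) ∂μ)).rnDeriv μ
                x).toReal)
            ∂(μ.withDensity fun x =>
              ENNReal.ofReal (Real.exp (-k x) / ∫ y, Real.exp (-k y) ∂μ)))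
          + (∫ x, k x
              ∂(μ.withDensity fun x =>
                ENNReal.ofReal (Real.exp (-k x) / ∫ y, Real.exp (-k y) ∂μ)))
        = -Real.log (∫ x, Real.exp (-k x) ∂μ)) := by
  have hke : Integrable (fun x => Real.exp (-k x)) μ := by
    refine (integrable_const (Real.exp Ck)).mono'
      (Real.measurable_exp.comp hk.neg).aestronglyMeasurable
      (Filter.Eventually.of_forall fun x => ?_)
    rw [Real.norm_eq_abs, abs_of_pos (Real.exp_pos _)]
    exact Real.exp_le_exp.mpr (by have := abs_le.mp (hbd x); linarith)
  have hkint : ∀ (m : Measure (EuclideanSpace ℝ (Fin n))) [IsFiniteMeasure m],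
      Integrable k m := fun m _ =>
    (integrable_const Ck).mono' hk.aestronglyMeasurable
      (Filter.Eventually.of_forall fun x => by rw [Real.norm_eq_abs]; exact hbd x)
  have h_eq : (μ.withDensity fun x =>
      ENNReal.ofReal (Real.exp (-k x) / ∫ y, Real.exp (-k y) ∂μ))
      = μ.tilted (fun x => -k x) := rfl
  rw [h_eq]
  have hprob : IsProbabilityMeasure (μ.tilted fun x => -k x) :=
    isProbabilityMeasure_tilted hke
  have hac : (μ.tilted fun x => -k x) ≪ μ := tilted_absolutelyContinuous μ _
  have hllr_eq : (fun x => Real.log (((μ.tilted fun x => -k x).rnDeriv μ x).toReal))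
      =ᵐ[μ.tilted fun x => -k x]
        fun x => -k x - Real.log (∫ x, Real.exp (-k x) ∂μ) :=
    hac.ae_le (log_rnDeriv_tilted_left_self hke)
  have h_int_star : Integrable
      (fun x => Real.log (((μ.tilted fun x => -k x).rnDeriv μ x).toReal))
      (μ.tilted fun x => -k x) := by
    haveI := hprob
    refine Integrable.congr ?_ hllr_eq.symm
    exact ((hkint _).neg).sub (integrable_const _)
  have h_val : (∫ x, Real.log (((μ.tilted fun x => -k x).rnDeriv μ x).toReal)
        ∂(μ.tilted fun x => -k x)) + ∫ x, k x ∂(μ.tilted fun x => -k x)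
      = -Real.log (∫ x, Real.exp (-k x) ∂μ) := by
    haveI := hprob
    have hi1 : Integrable (fun x : EuclideanSpace ℝ (Fin n) => -k x)
        (μ.tilted fun x => -k x) := (hkint _).neg
    rw [integral_congr_ae hllr_eq,
      integral_sub hi1 (integrable_const _), integral_neg, integral_const, probReal_univ]
    simp only [ENNReal.toReal_one, one_smul]
    ring
  refine ⟨⟨⟨μ.tilted fun x => -k x, hprob, hac, h_int_star, h_val.symm⟩, ?_⟩,
    hprob, hac, h_int_star, h_val⟩
  rintro r ⟨m, hm, hmμ, hint, hr⟩
  have hint' : Integrable (llr m μ) m := hint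
  have hmν' : m ≪ μ.tilted fun x => -k x := hmμ.trans (absolutelyContinuous_tilted hke)
  haveI := hm
  have hmneg : Integrable (fun x : EuclideanSpace ℝ (Fin n) => -k x) m := (hkint _).neg
  have hint'' : Integrable (llr m (μ.tilted fun x => -k x)) m :=
    integrable_llr_tilted_right (f := fun x => -k x) hmμ hmneg hint' hke
  have h0 : 0 ≤ ∫ x, llr m (μ.tilted fun x => -k x) x ∂m :=
    stmt17_llr_nonneg _ _ hmν' hint''
  have hcalc := integral_llr_tilted_right (f := fun x => -k x) hmμ hmneg hke hint'
  rw [hcalc, integral_neg] at h0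
  have hllr_id : (∫ x, Real.log ((m.rnDeriv μ x).toReal) ∂m) = ∫ x, llr m μ x ∂m := rfl
  rw [hr, hllr_id]
  linarith
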